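/- arXiv:2409.15225 — 2 statements merged into one kernel-verified Lean document; each statement's English description precedes it below -/
import Mathlib

section
/- Let μ > 0 and let p ∈ V_μ. Then ∑_{n≥0} |n − μ| p_n ≤ 2√2 · μ · √(G[p]). (For integer μ, the left-hand side equals the Wasserstein-1 distance W1(p, δ_μ).) -/
/-- Cumulative distribution function of a pmf on ℕ: `F n = ∑_{m ≤ n} p m`. -/
noncomputable def cdf (p : ℕ → ℝ) (n : ℕ) : ℝ := ∑ m ∈ Finset.range (n + 1), p m

/-- Wasserstein-1 distance between two pmfs on ℕ, `W1(p,q) = ∑_{n ≥ 0} |F_n - H_n|`. -/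
noncomputable def W1 (p q : ℕ → ℝ) : ℝ := ∑' n : ℕ, |cdf p n - cdf q n|

/-- Gini index of a pmf on ℕ with mean μ: `G[p] = (1/(2μ)) ∑_i ∑_j |i-j| p_i p_j`. -/
noncomputable def Gini (μ : ℝ) (p : ℕ → ℝ) : ℝ :=
  (1 / (2 * μ)) * ∑' i : ℕ, ∑' j : ℕ, |(i : ℝ) - (j : ℝ)| * p i * p j

/-- The shifted Bernoulli distribution with mean μ:
`p*_{⌊μ⌋} = 1 - μ + ⌊μ⌋`, `p*_{⌊μ⌋+1} = μ - ⌊μ⌋`, `p*_n = 0` otherwise. -/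
noncomputable def pstar (μ : ℝ) : ℕ → ℝ := fun n =>
  if n = ⌊μ⌋₊ then 1 - μ + (⌊μ⌋₊ : ℝ)
  else if n = ⌊μ⌋₊ + 1 then μ - (⌊μ⌋₊ : ℝ)
  else 0

/-- The Dirac distribution on ℕ concentrated at `k`. -/
noncomputable def dirac (k : ℕ) : ℕ → ℝ := fun n => if n = k then 1 else 0

/-!
Write `D = ∑ |n - μ| p n`. Since `y ↦ |i - y|` is convex, Jensen gives
`|i - μ| ≤ ∑_j |i - j| p_j`, and averaging over `i` yields `D ≤ 2 μ G[p]`.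
The triangle inequality `|i - j| ≤ i + j` gives `G[p] ≤ 1`, hence `G[p] ≤ √G[p]`,
so `D ≤ 2 μ √G[p] ≤ 2 √2 μ √G[p]`.
-/

section

variable {p : ℕ → ℝ} {μ : ℝ}

lemma summable_abs_sub_mul (y : ℝ) (hpos : ∀ n, 0 ≤ p n) (hp : Summable p)
    (hmean : Summable fun n : ℕ => (n : ℝ) * p n) :
    Summable fun n : ℕ => |y - n| * p n := by
  have hbound : Summable fun n : ℕ => (|y| + n) * p n := by
    simpa only [add_mul] using (hp.mul_left |y|).add hmean
  refine Summable.of_nonneg_of_le (fun n => mul_nonneg (abs_nonneg _) (hpos n))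
    (fun n => mul_le_mul_of_nonneg_right ?_ (hpos n)) hbound
  simpa using abs_sub y (n : ℝ)

lemma tsum_abs_sub_mul_le (y : ℝ) (hpos : ∀ n, 0 ≤ p n) (hsum : HasSum p 1)
    (hmean : HasSum (fun n : ℕ => (n : ℝ) * p n) μ) :
    ∑' n : ℕ, |y - n| * p n ≤ |y| + μ := by
  have hbound : HasSum (fun n : ℕ => (|y| + n) * p n) (|y| + μ) := by
    simpa [add_mul] using (hsum.mul_left |y|).add hmean
  rw [← hbound.tsum_eq]
  refine Summable.tsum_le_tsum (fun n => mul_le_mul_of_nonneg_right ?_ (hpos n))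
    (summable_abs_sub_mul y hpos hsum.summable hmean.summable) hbound.summable
  simpa using abs_sub y (n : ℝ)

lemma abs_sub_le_tsum_abs_sub_mul (y : ℝ) (hpos : ∀ n, 0 ≤ p n) (hsum : HasSum p 1)
    (hmean : HasSum (fun n : ℕ => (n : ℝ) * p n) μ) :
    |y - μ| ≤ ∑' n : ℕ, |y - n| * p n := by
  have hdiff : HasSum (fun n : ℕ => (y - n) * p n) (y - μ) := by
    simpa [sub_mul] using (hsum.mul_left y).sub hmean
  have hnorm : ∀ n : ℕ, ‖(y - n) * p n‖ = |y - n| * p n := fun n => by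
    rw [Real.norm_eq_abs, abs_mul, abs_of_nonneg (hpos n)]
  rw [← hdiff.tsum_eq, ← Real.norm_eq_abs, ← tsum_congr hnorm]
  exact norm_tsum_le_tsum_norm
    (by simpa only [hnorm] using summable_abs_sub_mul y hpos hsum.summable hmean.summable)

lemma summable_mul_tsum_abs_sub_mul (hpos : ∀ n, 0 ≤ p n) (hsum : HasSum p 1)
    (hmean : HasSum (fun n : ℕ => (n : ℝ) * p n) μ) :
    Summable fun i : ℕ => p i * ∑' j : ℕ, |(i : ℝ) - j| * p j := by
  have hbound : Summable fun i : ℕ => p i * (i + μ) :=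
    (hmean.summable.add (hsum.summable.mul_right μ)).congr fun i => by ring
  refine Summable.of_nonneg_of_le
    (fun i => mul_nonneg (hpos i) (tsum_nonneg fun j => mul_nonneg (abs_nonneg _) (hpos j)))
    (fun i => mul_le_mul_of_nonneg_left ?_ (hpos i)) hbound
  simpa using tsum_abs_sub_mul_le (i : ℝ) hpos hsum hmean

lemma two_mul_mul_gini (hμ : μ ≠ 0) :
    2 * μ * Gini μ p = ∑' i : ℕ, p i * ∑' j : ℕ, |(i : ℝ) - j| * p j := by
  rw [Gini, ← mul_assoc, mul_one_div_cancel (by simpa using hμ), one_mul]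
  refine tsum_congr fun i => ?_
  rw [← tsum_mul_left]
  exact tsum_congr fun j => by ring

lemma gini_nonneg (hμ : 0 ≤ μ) (hpos : ∀ n, 0 ≤ p n) : 0 ≤ Gini μ p :=
  mul_nonneg (by positivity) <| tsum_nonneg fun i => tsum_nonneg fun j =>
    mul_nonneg (mul_nonneg (abs_nonneg _) (hpos i)) (hpos j)

lemma gini_le_one (hμ : 0 < μ) (hpos : ∀ n, 0 ≤ p n) (hsum : HasSum p 1)
    (hmean : HasSum (fun n : ℕ => (n : ℝ) * p n) μ) :
    Gini μ p ≤ 1 := by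
  have hbound : HasSum (fun i : ℕ => p i * (i + μ)) (2 * μ * 1) := by
    convert hmean.add (hsum.mul_right μ) using 1
    · ext i; ring
    · ring
  refine le_of_mul_le_mul_left ?_ (by positivity : 0 < 2 * μ)
  rw [two_mul_mul_gini hμ.ne', ← hbound.tsum_eq]
  refine Summable.tsum_le_tsum (fun i => mul_le_mul_of_nonneg_left ?_ (hpos i))
    (summable_mul_tsum_abs_sub_mul hpos hsum hmean) hbound.summable
  simpa using tsum_abs_sub_mul_le (i : ℝ) hpos hsum hmean

lemma tsum_abs_sub_mul_le_two_mul_mul_gini (hμ : 0 < μ) (hpos : ∀ n, 0 ≤ p n)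
    (hsum : HasSum p 1) (hmean : HasSum (fun n : ℕ => (n : ℝ) * p n) μ) :
    ∑' n : ℕ, |(n : ℝ) - μ| * p n ≤ 2 * μ * Gini μ p := by
  rw [two_mul_mul_gini hμ.ne']
  refine Summable.tsum_le_tsum (fun n => ?_)
    ((summable_abs_sub_mul μ hpos hsum.summable hmean.summable).congr fun n => by
      rw [abs_sub_comm])
    (summable_mul_tsum_abs_sub_mul hpos hsum hmean)
  rw [mul_comm]
  exact mul_le_mul_of_nonneg_left (abs_sub_le_tsum_abs_sub_mul (n : ℝ) hpos hsum hmean) (hpos n)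

end

theorem stmt_3 (μ : ℝ) (hμ : 0 < μ) (p : ℕ → ℝ)
    (hpos : ∀ n, 0 ≤ p n) (hsum : HasSum p 1)
    (hmean : HasSum (fun n : ℕ => (n : ℝ) * p n) μ) :
    (∑' n : ℕ, |(n : ℝ) - μ| * p n) ≤ 2 * Real.sqrt 2 * μ * Real.sqrt (Gini μ p) := by
  have hG₀ := gini_nonneg hμ.le hpos
  have hG₁ := gini_le_one hμ hpos hsum hmean
  have hG_le_sqrt : Gini μ p ≤ √(Gini μ p) := Real.le_sqrt_of_sq_le (by nlinarith)
  have hone_le_sqrt_two : (1 : ℝ) ≤ √2 := by simp [Real.one_le_sqrt]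
  calc ∑' n : ℕ, |(n : ℝ) - μ| * p n ≤ 2 * μ * Gini μ p :=
        tsum_abs_sub_mul_le_two_mul_mul_gini hμ hpos hsum hmean
    _ ≤ 2 * μ * √(Gini μ p) := by gcongr
    _ ≤ 2 * √2 * μ * √(Gini μ p) := by
        have := mul_nonneg hμ.le (Real.sqrt_nonneg (Gini μ p))
        nlinarith
end

section
/- Let μ ∈ (0,1) and let p ∈ V_μ. Then W1(p, p*) ≤ 2 (G[p] − G[p*]), where p* is the shifted Bernoulli distribution with mean μ, which for μ ∈ (0,1) satisfies p*_0 = 1−μ, p*_1 = μ, and G[p*] = 1−μ. -/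
open scoped ENNReal

theorem tsum_eq_toReal_tsum_ofReal {α : Type*} {f : α → ℝ} (hf : ∀ a, 0 ≤ f a) :
    ∑' a, f a = (∑' a, ENNReal.ofReal (f a)).toReal := by
  lift f to α → NNReal using hf
  simp only [ENNReal.ofReal_coe_nnreal, ← NNReal.coe_tsum, NNReal.tsum_eq_toNNReal_tsum]
  rfl

theorem tsum_tsum_eq_toReal_tsum_tsum_ofReal {α β : Type*} {f : α → β → ℝ}
    (hf : ∀ a b, 0 ≤ f a b)    (hfin : ∑' a, ∑' b, ENNReal.ofReal (f a b) ≠ ∞) :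
    ∑' a, ∑' b, f a b = (∑' a, ∑' b, ENNReal.ofReal (f a b)).toReal := by
  rw [ENNReal.tsum_toReal_eq (ENNReal.ne_top_of_tsum_ne_top hfin)]
  exact tsum_congr fun a => tsum_eq_toReal_tsum_ofReal (hf a)

theorem HasSum.tsum_ofReal_eq {α : Type*} {f : α → ℝ} {s : ℝ} (h : HasSum f s)
    (hf : ∀ a, 0 ≤ f a) :
    ∑' a, ENNReal.ofReal (f a) = ENNReal.ofReal s := by
  rw [← ENNReal.ofReal_tsum_of_nonneg hf h.summable, h.tsum_eq]

theorem hasSum_of_tsum_ofReal_eq {α : Type*} {f : α → ℝ} {s : ℝ} (hf : ∀ a, 0 ≤ f a)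
    (hs : 0 ≤ s) (h : ∑' a, ENNReal.ofReal (f a) = ENNReal.ofReal s) : HasSum f s := by
  have hsum : Summable f := by
    refine (ENNReal.summable_toReal (h ▸ ENNReal.ofReal_ne_top)).congr fun a => ?_
    exact ENNReal.toReal_ofReal (hf a)
  rwa [hsum.hasSum_iff, tsum_eq_toReal_tsum_ofReal hf, h, ENNReal.toReal_ofReal]

theorem tsum_ite_le_and_lt (a b : ℕ) :
    ∑' n, (if a ≤ n ∧ n < b then (1 : ℝ≥0∞) else 0) = (b - a : ℕ) := by
  rw [tsum_eq_sum (s := Finset.Ico a b) fun n hn => if_neg (by simpa using hn)]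
  rw [Finset.sum_congr rfl fun n hn => if_pos (Finset.mem_Ico.mp hn)]
  simp

theorem ofReal_abs_natCast_sub (i j : ℕ) :
    ENNReal.ofReal |(i : ℝ) - j| = (i - j : ℕ) + (j - i : ℕ) := by
  rcases le_total i j with h | h
  · rw [abs_of_nonpos (by simpa using h), neg_sub, ← Nat.cast_sub h, ENNReal.ofReal_natCast]
    simp [Nat.sub_eq_zero_of_le h]
  · rw [abs_of_nonneg (by simpa using h), ← Nat.cast_sub h, ENNReal.ofReal_natCast]
    simp [Nat.sub_eq_zero_of_le h]

theorem ofReal_abs_natCast_sub_eq_tsum (i j : ℕ) :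
    ENNReal.ofReal |(i : ℝ) - j|
      = ∑' n, ((if i ≤ n ∧ n < j then 1 else 0) + (if j ≤ n ∧ n < i then 1 else 0)) := by
  rw [ENNReal.tsum_add, tsum_ite_le_and_lt, tsum_ite_le_and_lt, ofReal_abs_natCast_sub, add_comm]

theorem tsum_tsum_ite_lt (e : ℕ → ℝ≥0∞) :
    ∑' n, ∑' m, (if n < m then e m else 0) = ∑' m : ℕ, (m : ℝ≥0∞) * e m := by
  rw [ENNReal.tsum_comm]
  refine tsum_congr fun m => ?_
  rw [tsum_eq_sum (s := Finset.range m) fun n hn => if_neg (by simpa using hn),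
    Finset.sum_congr rfl fun n hn => if_pos (Finset.mem_range.mp hn)]
  simp

theorem tsum_tsum_ofReal_abs_sub_mul_mul (e : ℕ → ℝ≥0∞) :
    ∑' (i : ℕ) (j : ℕ), ENNReal.ofReal |(i : ℝ) - j| * e i * e j
      = 2 * ∑' n, (∑' i, if i ≤ n then e i else 0) * ∑' j, if n < j then e j else 0 := by
  set c : ℕ → ℕ → ℕ → ℝ≥0∞ := fun n i j =>
    ((if i ≤ n ∧ n < j then 1 else 0) + (if j ≤ n ∧ n < i then 1 else 0)) * e i * e j
  have hsplit : ∀ n i j : ℕ, c n i j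
        = (if i ≤ n then e i else 0) * (if n < j then e j else 0)
          + (if n < i then e i else 0) * (if j ≤ n then e j else 0) := by
    intro n i j
    simp only [c]
    split_ifs <;> first | omega | simp
  calc ∑' (i : ℕ) (j : ℕ), ENNReal.ofReal |(i : ℝ) - j| * e i * e j
      = ∑' (i : ℕ) (j : ℕ) (n : ℕ), c n i j := by
        simp_rw [c, ofReal_abs_natCast_sub_eq_tsum, ENNReal.tsum_mul_right]
    _ = ∑' (n : ℕ) (i : ℕ) (j : ℕ), c n i j :=
        (tsum_congr fun i => ENNReal.tsum_comm).trans ENNReal.tsum_comm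
    _ = 2 * ∑' n, (∑' i, if i ≤ n then e i else 0) * ∑' j, if n < j then e j else 0 := by
        rw [← ENNReal.tsum_mul_left]
        refine tsum_congr fun n => ?_
        simp_rw [hsplit, ENNReal.tsum_add, ENNReal.tsum_mul_left, ENNReal.tsum_mul_right]
        ring

section Cdf

variable {p : ℕ → ℝ}

theorem hasSum_ite_le_cdf (n : ℕ) : HasSum (fun m => if m ≤ n then p m else 0) (cdf p n) := by
  have h : HasSum (fun m => if m ≤ n then p m else 0)
      (∑ m ∈ Finset.range (n + 1), if m ≤ n then p m else 0) :=
    hasSum_sum_of_ne_finset_zero fun m hm => if_neg (by simpa [Nat.lt_succ_iff] using hm)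
  rwa [Finset.sum_congr rfl fun m hm => if_pos (by simpa [Nat.lt_succ_iff] using hm)] at h

theorem HasSum.hasSum_ite_lt {s : ℝ} (h : HasSum p s) (n : ℕ) :
    HasSum (fun m => if n < m then p m else 0) (s - cdf p n) := by
  refine (h.sub (hasSum_ite_le_cdf n)).congr_fun fun m => ?_
  split_ifs <;> first | omega | ring

variable (hp : ∀ n, 0 ≤ p n)
include hp

theorem cdf_nonneg (n : ℕ) : 0 ≤ cdf p n := Finset.sum_nonneg fun m _ => hp m

theorem cdf_mono : Monotone (cdf p) := fun _ _ hmn =>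
  Finset.sum_le_sum_of_subset_of_nonneg (Finset.range_subset_range.2 (by omega)) fun m _ _ => hp m

theorem cdf_le_of_hasSum {s : ℝ} (h : HasSum p s) (n : ℕ) : cdf p n ≤ s :=
  sub_nonneg.1 <| (h.hasSum_ite_lt n).nonneg fun m => by split_ifs <;> simp [hp]

theorem ofReal_one_sub_cdf (h1 : HasSum p 1) (n : ℕ) :
    ENNReal.ofReal (1 - cdf p n) = ∑' m, if n < m then ENNReal.ofReal (p m) else 0 := by
  rw [← (h1.hasSum_ite_lt n).tsum_ofReal_eq fun m => by split_ifs <;> simp [hp]]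
  simp only [apply_ite ENNReal.ofReal, ENNReal.ofReal_zero]

theorem ofReal_cdf (n : ℕ) :
    ENNReal.ofReal (cdf p n) = ∑' m, if m ≤ n then ENNReal.ofReal (p m) else 0 := by
  rw [← (hasSum_ite_le_cdf n).tsum_ofReal_eq fun m => by split_ifs <;> simp [hp]]
  simp only [apply_ite ENNReal.ofReal, ENNReal.ofReal_zero]

theorem hasSum_one_sub_cdf {μ : ℝ} (h1 : HasSum p 1)
    (hmean : HasSum (fun n : ℕ => (n : ℝ) * p n) μ) :
    HasSum (fun n => 1 - cdf p n) μ := by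
  refine hasSum_of_tsum_ofReal_eq (fun n => sub_nonneg.2 (cdf_le_of_hasSum hp h1 n))
    (hmean.nonneg fun n => mul_nonneg n.cast_nonneg (hp n)) ?_
  rw [tsum_congr (ofReal_one_sub_cdf hp h1), tsum_tsum_ite_lt,
    ← hmean.tsum_ofReal_eq fun n => mul_nonneg n.cast_nonneg (hp n)]
  simp only [ENNReal.ofReal_mul (Nat.cast_nonneg _), ENNReal.ofReal_natCast]

theorem tsum_tsum_abs_sub_mul_mul {μ : ℝ} (h1 : HasSum p 1)
    (hmean : HasSum (fun n : ℕ => (n : ℝ) * p n) μ) :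
    ∑' (i : ℕ) (j : ℕ), |(i : ℝ) - j| * p i * p j = 2 * ∑' n, (1 - cdf p n) * cdf p n := by
  have hterm_nonneg : ∀ n, 0 ≤ (1 - cdf p n) * cdf p n := fun n =>
    mul_nonneg (sub_nonneg.2 (cdf_le_of_hasSum hp h1 n)) (cdf_nonneg hp n)
  have hsummable : Summable fun n => (1 - cdf p n) * cdf p n :=
    (hasSum_one_sub_cdf hp h1 hmean).summable.of_nonneg_of_le hterm_nonneg fun n =>
      mul_le_of_le_one_right (sub_nonneg.2 (cdf_le_of_hasSum hp h1 n)) (cdf_le_of_hasSum hp h1 n)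
  have hennreal : ∑' (i : ℕ) (j : ℕ), ENNReal.ofReal (|(i : ℝ) - j| * p i * p j)
      = 2 * ∑' n, ENNReal.ofReal ((1 - cdf p n) * cdf p n) := by
    simp_rw [ENNReal.ofReal_mul (mul_nonneg (abs_nonneg _) (hp _)),
      ENNReal.ofReal_mul (abs_nonneg _), tsum_tsum_ofReal_abs_sub_mul_mul,
      ENNReal.ofReal_mul (sub_nonneg.2 (cdf_le_of_hasSum hp h1 _)), ofReal_cdf hp,
      ofReal_one_sub_cdf hp h1, mul_comm]
  rw [tsum_tsum_eq_toReal_tsum_tsum_ofReal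
      (fun i j => mul_nonneg (mul_nonneg (abs_nonneg _) (hp i)) (hp j))
      (hennreal ▸ ENNReal.mul_ne_top ENNReal.ofNat_ne_top hsummable.tsum_ofReal_ne_top),
    hennreal, ENNReal.toReal_mul, ← tsum_eq_toReal_tsum_ofReal hterm_nonneg]
  norm_num

theorem gini_eq_tsum_div {μ : ℝ} (h1 : HasSum p 1)
    (hmean : HasSum (fun n : ℕ => (n : ℝ) * p n) μ) :
    Gini μ p = (∑' n, (1 - cdf p n) * cdf p n) / μ := by
  rw [Gini, tsum_tsum_abs_sub_mul_mul hp h1 hmean]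
  ring

end Cdf

theorem mul_one_sub_le_tsum_mul_one_sub {a : ℕ → ℝ} {s : ℝ} (ha : HasSum a s)
    (h0 : ∀ n, 0 ≤ a n) (h1 : ∀ n, a n ≤ 1) (hanti : Antitone a) :
    s * (1 - a 0) ≤ ∑' n, a n * (1 - a n) := by
  rw [← ha.tsum_eq, ← tsum_mul_right]
  refine Summable.tsum_le_tsum (fun n => ?_) (ha.summable.mul_right _) ?_
  · exact mul_le_mul_of_nonneg_left (by linarith [hanti (Nat.zero_le n)]) (h0 n)
  · exact ha.summable.of_nonneg_of_le (fun n => mul_nonneg (h0 n) (by linarith [h1 n]))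
      fun n => mul_le_of_le_one_right (h0 n) (by linarith [h0 n])

section ShiftedBernoulli

variable {μ : ℝ} (hμ1 : μ < 1)
include hμ1

theorem pstar_of_lt_one (n : ℕ) :
    pstar μ n = if n = 0 then 1 - μ else if n = 1 then μ else 0 := by
  simp [pstar, Nat.floor_eq_zero.2 hμ1]

theorem cdf_pstar_zero : cdf (pstar μ) 0 = 1 - μ := by
  simp [cdf, pstar_of_lt_one hμ1]

theorem cdf_pstar_succ (n : ℕ) : cdf (pstar μ) (n + 1) = 1 := by
  induction n with
  | zero => simp [cdf, Finset.sum_range_succ, pstar_of_lt_one hμ1]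
  | succ n ih => rw [cdf, Finset.sum_range_succ, ← cdf, ih, pstar_of_lt_one hμ1]; simp

theorem gini_pstar (hμ0 : 0 < μ) : Gini μ (pstar μ) = 1 - μ := by
  have hsupp : ∀ n ∉ Finset.range 2, pstar μ n = 0 := fun n hn => by
    rw [pstar_of_lt_one hμ1, if_neg (by simp at hn; omega), if_neg (by simp at hn; omega)]
  have hmass : HasSum (pstar μ) 1 := by
    convert (hasSum_sum_of_ne_finset_zero hsupp : HasSum (pstar μ) _) using 1
    simp [Finset.sum_range_succ, pstar_of_lt_one hμ1]
  have hmean : HasSum (fun n : ℕ => (n : ℝ) * pstar μ n) μ := by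
    convert (hasSum_sum_of_ne_finset_zero fun n hn => by rw [hsupp n hn, mul_zero] :
      HasSum (fun n : ℕ => (n : ℝ) * pstar μ n) _) using 1
    simp [Finset.sum_range_succ, pstar_of_lt_one hμ1]
  have hnonneg : ∀ n, 0 ≤ pstar μ n := fun n => by
    rw [pstar_of_lt_one hμ1]; split_ifs <;> linarith
  rw [gini_eq_tsum_div hnonneg hmass hmean, tsum_eq_single 0 fun n hn => ?_, cdf_pstar_zero hμ1]
  · field_simp; ring
  · obtain ⟨k, rfl⟩ := Nat.exists_eq_succ_of_ne_zero hn
    rw [cdf_pstar_succ hμ1, sub_self, zero_mul]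

theorem W1_pstar {p : ℕ → ℝ} (hp : ∀ n, 0 ≤ p n) (h1 : HasSum p 1)
    (htail : HasSum (fun n => 1 - cdf p n) μ) :
    W1 p (pstar μ) = 2 * (μ - (1 - cdf p 0)) := by
  have hfirst : 1 - cdf p 0 ≤ μ :=
    le_hasSum htail 0 fun n _ => sub_nonneg.2 (cdf_le_of_hasSum hp h1 n)
  have hzero : |cdf p 0 - cdf (pstar μ) 0| = μ - (1 - cdf p 0) := by
    rw [cdf_pstar_zero hμ1, abs_of_nonneg (by linarith)]
    ring
  have hsucc : ∀ n, |cdf p (n + 1) - cdf (pstar μ) (n + 1)| = 1 - cdf p (n + 1) := fun n => by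
    rw [cdf_pstar_succ hμ1, abs_sub_comm, abs_of_nonneg (sub_nonneg.2 (cdf_le_of_hasSum hp h1 _))]
  have htail_succ := (hasSum_nat_add_iff' 1).2 htail
  rw [W1, Summable.tsum_eq_zero_add ((summable_nat_add_iff 1).1
    (htail_succ.summable.congr fun n => (hsucc n).symm)), hzero, tsum_congr hsucc,
    htail_succ.tsum_eq]
  simp only [Finset.sum_range_one]
  ring

end ShiftedBernoulli

theorem stmt_10 (μ : ℝ) (hμ0 : 0 < μ) (hμ1 : μ < 1) (p : ℕ → ℝ)
    (hpos : ∀ n, 0 ≤ p n) (hsum : HasSum p 1)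
    (hmean : HasSum (fun n : ℕ => (n : ℝ) * p n) μ) :
    W1 p (pstar μ) ≤ 2 * (Gini μ p - Gini μ (pstar μ)) := by
  have htail := hasSum_one_sub_cdf hpos hsum hmean
  have hbound := mul_one_sub_le_tsum_mul_one_sub htail
    (fun n => sub_nonneg.2 (cdf_le_of_hasSum hpos hsum n))
    (fun n => sub_le_self _ (cdf_nonneg hpos n))
    fun _ _ hmn => sub_le_sub_left (cdf_mono hpos hmn) 1
  simp only [sub_sub_cancel] at hbound
  rw [W1_pstar hμ1 hpos hsum htail, gini_eq_tsum_div hpos hsum hmean, gini_pstar hμ1 hμ0]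
  have hgini : 1 - (1 - cdf p 0) ≤ (∑' n, (1 - cdf p n) * cdf p n) / μ := by
    rw [le_div_iff₀ hμ0]
    linarith
  linarith
end
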